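/- arXiv:1408.2281 — 5 statements merged into one kernel-verified Lean document; each statement's English description precedes it below -/
import Mathlib

section
/- Let n ≥ 1. Given a tree T that is (2n−1)-good from a string α and a set P ⊆ T, there is a subset S of T which is n-good from α for P or n-good from α for T \ P. -/
/-- A *tree*: a finite set of pairwise incomparable strings (antichain under
the prefix/extension order), where a string is a finite sequence of naturals. -/
def IsTree (T : Finset (List ℕ)) : Prop :=
  ∀ σ ∈ T, ∀ τ ∈ T, σ <+: τ → σ = τ

/-- `T` is `a`-good from `σ`: `T` is nonempty, every string in `T` extends `σ`,
and for every `τ` with `σ ⊆ τ ⊊ ρ` for some `ρ ∈ T`, at least `a` immediate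
successors `τ*k` of `τ` are initial segments of elements of `T`. -/
def GoodFrom (a : ℕ) (T : Finset (List ℕ)) (σ : List ℕ) : Prop :=
  T.Nonempty ∧ (∀ ρ ∈ T, σ <+: ρ) ∧
    ∀ τ : List ℕ, (∃ ρ ∈ T, σ <+: τ ∧ τ <+: ρ ∧ τ ≠ ρ) →
      a ≤ {k : ℕ | ∃ ρ ∈ T, τ ++ [k] <+: ρ}.ncard

/-- `T` is `a`-good from `σ` for `P`: in addition `T ⊆ P`. -/
def GoodFromFor (a : ℕ) (T : Finset (List ℕ)) (σ : List ℕ) (P : Set (List ℕ)) : Prop :=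
  GoodFrom a T σ ∧ ↑T ⊆ P

/-!
Induction on the height of the tree, from the leaves down. A leaf `{τ}` is trivially good and
monochromatic. At an inner node `τ`, each of the at least `2n - 1` successors `τ*k` carries, by
induction, an `n`-good subtree of one colour; by pigeonhole at least `n` of them share a colour,
and their union is an `n`-good subtree from `τ` of that colour.
-/

/-- The set whose size `GoodFrom` bounds at the node `τ` (definitionally). -/
def successors (S : Finset (List ℕ)) (τ : List ℕ) : Set ℕ :=
  {k : ℕ | ∃ ρ ∈ S, τ ++ [k] <+: ρ}

lemma successors_finite (S : Finset (List ℕ)) (τ : List ℕ) : (successors S τ).Finite := by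
  refine (S.image fun ρ => ρ.getD τ.length 0).finite_toSet.subset ?_
  rintro k ⟨ρ, hρ, hpre⟩
  have hlen : τ.length < (τ ++ [k]).length := by simp
  have hlt : τ.length < ρ.length := hlen.trans_le hpre.length_le
  refine Finset.mem_image.mpr ⟨ρ, hρ, ?_⟩
  rw [List.getD_eq_getElem _ _ hlt, ← hpre.getElem hlen]
  simp

lemma successors_mono {S S' : Finset (List ℕ)} (h : S ⊆ S') (τ : List ℕ) :
    successors S τ ⊆ successors S' τ := by
  rintro k ⟨ρ, hρ, hpre⟩
  exact ⟨ρ, h hρ, hpre⟩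

lemma List.IsPrefix.length_lt_of_ne {β : Type*} {l₁ l₂ : List β} (h : l₁ <+: l₂) (hne : l₁ ≠ l₂) :
    l₁.length < l₂.length :=
  h.length_le.lt_of_ne fun hlen => hne (h.eq_of_length hlen)

lemma GoodFrom.singleton (a : ℕ) (τ : List ℕ) : GoodFrom a {τ} τ := by
  refine ⟨Finset.singleton_nonempty τ, by simp, ?_⟩
  rintro τ' ⟨ρ, hρ, hττ', hτ'ρ, hne⟩
  rw [Finset.mem_singleton] at hρ
  subst hρ
  exact absurd (hτ'ρ.eq_of_length (le_antisymm hτ'ρ.length_le hττ'.length_le)) hne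

lemma GoodFrom.biUnion {n : ℕ} {τ : List ℕ} {B : Finset ℕ} {f : ℕ → Finset (List ℕ)}
    (hB : B.Nonempty) (hcard : n ≤ B.card) (hf : ∀ k ∈ B, GoodFrom n (f k) (τ ++ [k])) :
    GoodFrom n (B.biUnion f) τ := by
  have hsub : ∀ k ∈ B, f k ⊆ B.biUnion f := fun k hk => Finset.subset_biUnion_of_mem f hk
  refine ⟨?_, ?_, ?_⟩
  · obtain ⟨k, hk⟩ := hB
    exact (hf k hk).1.mono (hsub k hk)
  · intro ρ hρ
    obtain ⟨k, hk, hρk⟩ := Finset.mem_biUnion.mp hρ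
    exact (List.prefix_append τ [k]).trans ((hf k hk).2.1 ρ hρk)
  · rintro τ' ⟨ρ, hρ, hττ', hτ'ρ, hne⟩
    obtain ⟨k, hk, hρk⟩ := Finset.mem_biUnion.mp hρ
    by_cases hτ' : τ' = τ
    · subst hτ'
      have hB_succ : (B : Set ℕ) ⊆ successors (B.biUnion f) τ' := fun k' hk' => by
        obtain ⟨ρ', hρ'⟩ := (hf k' hk').1
        exact ⟨ρ', hsub k' hk' hρ', (hf k' hk').2.1 ρ' hρ'⟩
      calc n ≤ B.card := hcard
        _ = (B : Set ℕ).ncard := (Set.ncard_coe_finset B).symm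
        _ ≤ _ := Set.ncard_le_ncard hB_succ (successors_finite _ τ')
    · -- `τ'` lies strictly above `τ`, hence inside the single branch `f k`
      have hlt := hττ'.length_lt_of_ne (Ne.symm hτ')
      have hkτ' : τ ++ [k] <+: τ' :=
        List.prefix_of_prefix_length_le ((hf k hk).2.1 ρ hρk) hτ'ρ (by simpa using hlt)
      exact ((hf k hk).2.2 τ' ⟨ρ, hρk, hkτ', hτ'ρ, hne⟩).trans
        (Set.ncard_le_ncard (successors_mono (hsub k hk) τ') (successors_finite _ τ'))

lemma Finset.le_card_filter_or_le_card_filter_not {β : Type*} (s : Finset β) (p : β → Prop)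
    [DecidablePred p] {n : ℕ} (h : 2 * n - 1 ≤ s.card) :
    n ≤ (s.filter p).card ∨ n ≤ (s.filter (¬p ·)).card := by
  have := s.card_filter_add_card_filter_not p
  omega

theorem GoodFrom.exists_monochromatic_from {n : ℕ} (hn : 1 ≤ n) {T : Finset (List ℕ)}
    {α : List ℕ} (hgood : GoodFrom (2 * n - 1) T α) (P : Set (List ℕ)) (τ : List ℕ)
    (hατ : α <+: τ) (hτ : ∃ ρ ∈ T, τ <+: ρ) :
    ∃ S ⊆ T, GoodFrom n S τ ∧ ((S : Set (List ℕ)) ⊆ P ∨ (S : Set (List ℕ)) ⊆ Pᶜ) := by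
  classical
  by_cases hτT : τ ∈ T
  · refine ⟨{τ}, by simpa using hτT, GoodFrom.singleton n τ, ?_⟩
    by_cases hτP : τ ∈ P <;> simp [hτP]
  obtain ⟨ρ, hρT, hτρ⟩ := hτ
  have hτρ_ne : τ ≠ ρ := fun h => hτT (h ▸ hρT)
  have hlt : τ.length < ρ.length := hτρ.length_lt_of_ne hτρ_ne
  have hρ_height : ρ.length ≤ T.sup List.length := Finset.le_sup (f := List.length) hρT
  have ih : ∀ k ∈ successors T τ, ∃ S ⊆ T, GoodFrom n S (τ ++ [k]) ∧
      ((S : Set (List ℕ)) ⊆ P ∨ (S : Set (List ℕ)) ⊆ Pᶜ) := fun k ⟨ρ', hρ'T, hpre⟩ =>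
    hgood.exists_monochromatic_from hn P (τ ++ [k]) (hατ.trans (List.prefix_append τ [k]))
      ⟨ρ', hρ'T, hpre⟩
  choose! f hfT hf_good hf_colour using ih
  set K := (successors_finite T τ).toFinset
  have hK : 2 * n - 1 ≤ K.card := by
    rw [← Set.ncard_eq_toFinset_card _ (successors_finite T τ)]
    exact hgood.2.2 τ ⟨ρ, hρT, hατ, hτρ, hτρ_ne⟩
  have glue : ∀ B ⊆ K, n ≤ B.card → ∃ S ⊆ T, GoodFrom n S τ ∧
      ∀ Q : Set (List ℕ), (∀ k ∈ B, (f k : Set (List ℕ)) ⊆ Q) → (S : Set (List ℕ)) ⊆ Q := by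
    intro B hBK hB
    have hBsucc : ∀ k ∈ B, k ∈ successors T τ := fun k hk => by simpa [K] using hBK hk
    refine ⟨B.biUnion f, Finset.biUnion_subset.mpr fun k hk => hfT k (hBsucc k hk),
      GoodFrom.biUnion (Finset.card_pos.mp (by omega)) hB fun k hk => hf_good k (hBsucc k hk),
      fun Q hQ => ?_⟩
    simpa using hQ
  rcases K.le_card_filter_or_le_card_filter_not (fun k => (f k : Set (List ℕ)) ⊆ P) hK
    with hP | hPc
  · obtain ⟨S, hST, hS, hSQ⟩ := glue _ (Finset.filter_subset _ _) hP
    exact ⟨S, hST, hS, Or.inl (hSQ P fun k hk => (Finset.mem_filter.mp hk).2)⟩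
  · obtain ⟨S, hST, hS, hSQ⟩ := glue _ (Finset.filter_subset _ _) hPc
    refine ⟨S, hST, hS, Or.inr (hSQ Pᶜ fun k hk => ?_)⟩
    obtain ⟨hkK, hkP⟩ := Finset.mem_filter.mp hk
    exact (hf_colour k (by simpa [K] using hkK)).resolve_left hkP
termination_by T.sup List.length - τ.length
decreasing_by simp only [List.length_append, List.length_singleton]; omega

theorem good_subset_or_complement_general (n : ℕ) (hn : 1 ≤ n)
    (T : Finset (List ℕ)) (α : List ℕ)
    (hgood : GoodFrom (2 * n - 1) T α)
    (P : Set (List ℕ)) :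
    ∃ S ⊆ T, GoodFromFor n S α P ∨ GoodFromFor n S α (↑T \ P) := by
  obtain ⟨ρ, hρT⟩ := hgood.1
  obtain ⟨S, hST, hS, hP | hPc⟩ :=
    hgood.exists_monochromatic_from hn P α (List.prefix_refl α) ⟨ρ, hρT, hgood.2.1 ρ hρT⟩
  · exact ⟨S, hST, Or.inl ⟨hS, hP⟩⟩
  · exact ⟨S, hST, Or.inr ⟨hS, Set.subset_inter (Finset.coe_subset.mpr hST) hPc⟩⟩

/-- Given a tree `T` that is `(2n−1)`-good from `α` and a set `P ⊆ T`, there is a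
subset `S` of `T` which is `n`-good from `α` for `P` or `n`-good from `α` for `T \ P`. -/
theorem good_subset_or_complement (n : ℕ) (hn : 1 ≤ n)
    (T : Finset (List ℕ)) (hT : IsTree T) (α : List ℕ)
    (hgood : GoodFrom (2 * n - 1) T α)
    (P : Set (List ℕ)) (hP : P ⊆ ↑T) :
    ∃ S ⊆ T, GoodFromFor n S α P ∨ GoodFromFor n S α (↑T \ P) :=
  good_subset_or_complement_general n hn T α hgood P
end

section
/- Let a, n ≥ 1, let Q_1, …, Q_a be sets of strings, and let Q = Q_1 ∪ … ∪ Q_a. If there is a 2^a·n-good tree from a string α for Q, then for some i with 1 ≤ i ≤ a there is an n-good tree from α for Q_i. -/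
/-!
By induction on height, if `T ⊆ A ∪ B` is `2m`-good from `α`, then every node `τ` of `T`
above `α` carries an `m`-good subtree of `T` from `τ` lying inside `A` or inside `B`: a leaf
is such a subtree by itself, and at an inner node the at least `2m` children split into those
carrying an `A`-subtree and those carrying a `B`-subtree; one class has at least `m` members,
and grafting their subtrees onto `τ` gives the subtree for `τ`. For `a` sets, write the union
as `Q 0 ∪ ⋃ i, Q i.succ` and halve the branching `2 ^ a * n` once per set.
-/

theorem List.eq_of_append_singleton_prefix {β : Type*} {τ ρ : List β} {k j : β}
    (hk : τ ++ [k] <+: ρ) (hj : τ ++ [j] <+: ρ) : k = j := by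
  rcases List.prefix_or_prefix_of_prefix hk hj with h | h
  · simpa using h.eq_of_length (by simp)
  · simpa using (h.eq_of_length (by simp)).symm

theorem List.IsPrefix.exists_append_singleton_prefix {β : Type*} {τ ρ : List β} (h : τ <+: ρ)
    (hne : τ ≠ ρ) : ∃ k, τ ++ [k] <+: ρ := by
  obtain ⟨_ | ⟨k, t⟩, rfl⟩ := h
  · simp at hne
  · exact ⟨k, t, by simp⟩

theorem IsTree.mono {S T : Finset (List ℕ)} (hT : IsTree T) (hST : S ⊆ T) : IsTree S :=
  fun σ hσ τ hτ => hT σ (hST hσ) τ (hST hτ)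

def childIndices (T : Finset (List ℕ)) (τ : List ℕ) : Set ℕ :=
  {k | ∃ ρ ∈ T, τ ++ [k] <+: ρ}

theorem childIndices_finite (T : Finset (List ℕ)) (τ : List ℕ) :
    (childIndices T τ).Finite := by
  refine (T.finite_toSet.biUnion fun ρ _ => ?_).subset fun k ⟨ρ, hρ, hk⟩ =>
    Set.mem_biUnion hρ (show k ∈ {k | τ ++ [k] <+: ρ} from hk)
  exact Set.Subsingleton.finite fun _ hk _ hj => List.eq_of_append_singleton_prefix hk hj

theorem childIndices_mono {S T : Finset (List ℕ)} (hST : S ⊆ T) (τ : List ℕ) :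
    childIndices S τ ⊆ childIndices T τ :=
  fun _ ⟨ρ, hρ, hk⟩ => ⟨ρ, hST hρ, hk⟩

theorem Finset.le_card_filter_or_le_card_filter {ι : Type*} [DecidableEq ι] {m : ℕ} {C : Finset ι}
    {p q : ι → Prop} [DecidablePred p] [DecidablePred q] (hpq : ∀ x ∈ C, p x ∨ q x)
    (hC : 2 * m ≤ C.card) : m ≤ (C.filter p).card ∨ m ≤ (C.filter q).card := by
  have hcover : C ⊆ C.filter p ∪ C.filter q := fun x hx => by
    simpa [Finset.mem_union, Finset.mem_filter, hx] using hpq x hx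
  have := (Finset.card_le_card hcover).trans (Finset.card_union_le _ _)
  omega

section GoodFrom

variable {m : ℕ} {T : Finset (List ℕ)} {τ : List ℕ}

theorem GoodFrom.mono {b : ℕ} (h : GoodFrom b T τ) (hmb : m ≤ b) : GoodFrom m T τ :=
  ⟨h.1, h.2.1, fun τ' hτ' => hmb.trans (h.2.2 τ' hτ')⟩

theorem goodFrom_singleton (m : ℕ) (τ : List ℕ) : GoodFrom m {τ} τ := by
  refine ⟨Finset.singleton_nonempty τ, by simp, ?_⟩
  rintro τ' ⟨ρ, hρ, hτ', hτ'ρ, hne⟩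
  rw [Finset.mem_singleton] at hρ
  subst hρ
  exact absurd (hτ'ρ.eq_of_length_le hτ'.length_le) hne

theorem goodFrom_biUnion {K : Finset ℕ} (S : ℕ → Finset (List ℕ)) (hK : K.Nonempty)
    (hcard : m ≤ K.card) (hS : ∀ k ∈ K, GoodFrom m (S k) (τ ++ [k])) :
    GoodFrom m (K.biUnion S) τ := by
  have hsub : ∀ k ∈ K, S k ⊆ K.biUnion S := fun k hk => Finset.subset_biUnion_of_mem S hk
  refine ⟨hK.biUnion fun k hk => (hS k hk).1, ?_, ?_⟩
  · intro ρ hρ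
    obtain ⟨k, hk, hρ⟩ := Finset.mem_biUnion.1 hρ
    exact (List.prefix_append τ [k]).trans ((hS k hk).2.1 ρ hρ)
  rintro τ' ⟨ρ, hρ, hττ', hτ'ρ, hne⟩
  obtain ⟨k, hk, hρk⟩ := Finset.mem_biUnion.1 hρ
  by_cases hτ' : τ' = τ
  · subst hτ'
    have hK_sub : (K : Set ℕ) ⊆ childIndices (K.biUnion S) τ' := by
      intro j hj
      obtain ⟨ρ', hρ'⟩ := (hS j hj).1
      exact ⟨ρ', hsub j hj hρ', (hS j hj).2.1 ρ' hρ'⟩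
    calc m ≤ K.card := hcard
      _ = (K : Set ℕ).ncard := (Set.ncard_coe_finset K).symm
      _ ≤ _ := Set.ncard_le_ncard hK_sub (childIndices_finite _ _)
  · obtain ⟨j, hj⟩ := hττ'.exists_append_singleton_prefix (Ne.symm hτ')
    obtain rfl : j = k :=
      List.eq_of_append_singleton_prefix (hj.trans hτ'ρ) ((hS k hk).2.1 ρ hρk)
    exact ((hS j hk).2.2 τ' ⟨ρ, hρk, hj, hτ'ρ, hne⟩).trans
      (Set.ncard_le_ncard (childIndices_mono (hsub j hk) τ') (childIndices_finite _ _))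

def HasGoodSubtree (m : ℕ) (T : Finset (List ℕ)) (τ : List ℕ) (P : Set (List ℕ)) : Prop :=
  ∃ S ⊆ T, GoodFromFor m S τ P

variable {P A B : Set (List ℕ)}

theorem HasGoodSubtree.mono {T' : Finset (List ℕ)} (h : HasGoodSubtree m T τ P)
    (hTT' : T ⊆ T') : HasGoodSubtree m T' τ P :=
  let ⟨S, hST, hS⟩ := h
  ⟨S, hST.trans hTT', hS⟩

theorem hasGoodSubtree_of_mem (hτT : τ ∈ T) (hτP : τ ∈ P) : HasGoodSubtree m T τ P :=
  ⟨{τ}, by simpa using hτT, goodFrom_singleton m τ, by simpa using hτP⟩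

theorem hasGoodSubtree_of_children {K : Finset ℕ} (hK : K.Nonempty) (hcard : m ≤ K.card)
    (h : ∀ k ∈ K, HasGoodSubtree m T (τ ++ [k]) P) : HasGoodSubtree m T τ P := by
  choose! S hST hS using h
  refine ⟨K.biUnion S, Finset.biUnion_subset.2 hST,
    goodFrom_biUnion S hK hcard fun k hk => (hS k hk).1, ?_⟩
  simpa using fun k hk => (hS k hk).2

theorem hasGoodSubtree_or_of_height {α : List ℕ} (hm : 1 ≤ m) (hsub : ↑T ⊆ A ∪ B)
    (hbranch : ∀ τ, (∃ ρ ∈ T, α <+: τ ∧ τ <+: ρ ∧ τ ≠ ρ) → 2 * m ≤ (childIndices T τ).ncard)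
    (d : ℕ) : ∀ τ, α <+: τ → (∃ ρ ∈ T, τ <+: ρ) →
      (∀ ρ ∈ T, τ <+: ρ → ρ.length ≤ τ.length + d) →
        HasGoodSubtree m T τ A ∨ HasGoodSubtree m T τ B := by
  classical
  induction d with
  | zero =>
    rintro τ - ⟨ρ, hρ, hτρ⟩ hlen
    obtain rfl := hτρ.eq_of_length_le (hlen ρ hρ hτρ)
    exact (hsub hρ).imp (hasGoodSubtree_of_mem hρ) (hasGoodSubtree_of_mem hρ)
  | succ d ih =>
    rintro τ hατ ⟨ρ, hρ, hτρ⟩ hlen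
    by_cases hτ : τ ∈ T
    · exact (hsub hτ).imp (hasGoodSubtree_of_mem hτ) (hasGoodSubtree_of_mem hτ)
    set C := (childIndices_finite T τ).toFinset
    have hC : 2 * m ≤ C.card := by
      rw [← Set.ncard_eq_toFinset_card _ (childIndices_finite T τ)]
      exact hbranch τ ⟨ρ, hρ, hατ, hτρ, fun h => hτ (h ▸ hρ)⟩
    have hchild : ∀ k ∈ C,
        HasGoodSubtree m T (τ ++ [k]) A ∨ HasGoodSubtree m T (τ ++ [k]) B := by
      intro k hk
      obtain ⟨ρ', hρ', hkρ'⟩ := (Set.Finite.mem_toFinset _).1 hk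
      refine ih _ (hατ.trans (List.prefix_append τ [k])) ⟨ρ', hρ', hkρ'⟩
        fun ρ'' hρ'' hkρ'' => ?_
      have := hlen ρ'' hρ'' ((List.prefix_append τ [k]).trans hkρ'')
      simp only [List.length_append, List.length_singleton]
      omega
    rcases Finset.le_card_filter_or_le_card_filter hchild hC with hA | hB
    · exact .inl <| hasGoodSubtree_of_children (Finset.card_pos.1 (by omega)) hA
        fun k hk => (Finset.mem_filter.1 hk).2
    · exact .inr <| hasGoodSubtree_of_children (Finset.card_pos.1 (by omega)) hB
        fun k hk => (Finset.mem_filter.1 hk).2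

theorem hasGoodSubtree_or_of_union {α : List ℕ} (hm : 1 ≤ m)
    (h : GoodFromFor (2 * m) T α (A ∪ B)) : HasGoodSubtree m T α A ∨ HasGoodSubtree m T α B := by
  obtain ⟨⟨⟨ρ, hρ⟩, hext, hbranch⟩, hsub⟩ := h
  exact hasGoodSubtree_or_of_height hm hsub hbranch (T.sup List.length) α List.prefix_rfl
    ⟨ρ, hρ, hext ρ hρ⟩ fun ρ hρ _ =>
      (Finset.le_sup (f := List.length) hρ).trans (Nat.le_add_left _ _)

theorem exists_hasGoodSubtree_of_iUnion {n : ℕ} (hn : 1 ≤ n) {α : List ℕ} :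
    ∀ {a : ℕ} (Q : Fin a → Set (List ℕ)) {T : Finset (List ℕ)},
      GoodFromFor (2 ^ a * n) T α (⋃ i, Q i) → ∃ i, HasGoodSubtree n T α (Q i)
  | 0, _, _, h => by
    obtain ⟨ρ, hρ⟩ := h.1.1
    simpa using h.2 hρ
  | a + 1, Q, _, h => by
    rw [Set.iUnion_fin_add_one_eq_iUnion_succ, pow_succ', mul_assoc] at h
    rcases hasGoodSubtree_or_of_union (Nat.mul_pos (by positivity) hn) h with
      ⟨S, hST, hS⟩ | ⟨S, hST, hS⟩
    · exact ⟨0, S, hST, hS.1.mono (Nat.le_mul_of_pos_left n (by positivity)), hS.2⟩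
    · obtain ⟨i, hi⟩ := exists_hasGoodSubtree_of_iUnion hn (Q ∘ Fin.succ) hS
      exact ⟨i.succ, hi.mono hST⟩

end GoodFrom

theorem good_tree_of_union_general (a n : ℕ) (hn : 1 ≤ n)
    (Q : Fin a → Set (List ℕ)) (α : List ℕ)
    (T : Finset (List ℕ)) (hT : IsTree T)
    (hgood : GoodFromFor (2 ^ a * n) T α (⋃ i, Q i)) :
    ∃ i : Fin a, ∃ S : Finset (List ℕ), IsTree S ∧ GoodFromFor n S α (Q i) := by
  obtain ⟨i, S, hST, hS⟩ := exists_hasGoodSubtree_of_iUnion hn Q hgood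
  exact ⟨i, S, hT.mono hST, hS⟩

/-- If there is a `2^a·n`-good tree from `α` for `Q = Q_1 ∪ ⋯ ∪ Q_a`, then for some
`i` there is an `n`-good tree from `α` for `Q_i`. -/
theorem good_tree_of_union (a n : ℕ) (ha : 1 ≤ a) (hn : 1 ≤ n)
    (Q : Fin a → Set (List ℕ)) (α : List ℕ)
    (T : Finset (List ℕ)) (hT : IsTree T)
    (hgood : GoodFromFor (2 ^ a * n) T α (⋃ i, Q i)) :
    ∃ i : Fin a, ∃ S : Finset (List ℕ), IsTree S ∧ GoodFromFor n S α (Q i) :=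
  good_tree_of_union_general a n hn Q α T hT hgood
end

section
/- For every DNR string α, there is no 2-good tree from α for the set of strings that are not DNR strings. In particular, since the empty string is a DNR string, there is no 2-good tree from the empty string for the set of non-DNR strings. -/
/-- `σ` is a DNR string: for every `x < |σ|`, it is not the case that the `x`-th
partial recursive function (in the standard numbering via `Nat.Partrec.Code`)
halts on input `x` with value `σ(x)`. -/
def DNRString (σ : List ℕ) : Prop :=
  ∀ (x : ℕ) (h : x < σ.length),
    σ.get ⟨x, h⟩ ∉ (Denumerable.ofNat Nat.Partrec.Code x).eval x

/-!
Starting from a DNR string `α` that is not itself a leaf, a `2`-good tree offers at least two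
successors `α ++ [k]`, and at most one of them can be killed by `φ_{|α|}(|α|)`. The surviving
successor is again DNR, and the part of the tree above it is again `2`-good from it. Climbing
this way we reach a leaf of the tree after finitely many steps, and that leaf is DNR.
-/

theorem Set.exists_mem_notMem_part_of_one_lt_ncard {α : Type*} {S : Set α}
    (hS : 1 < S.ncard) (p : Part α) : ∃ k ∈ S, k ∉ p := by
  by_cases hp : p.Dom
  · obtain ⟨k, hkS, hk⟩ := Set.exists_ne_of_one_lt_ncard hS (p.get hp)
    exact ⟨k, hkS, fun hkp => hk (Part.get_eq_of_mem hkp hp).symm⟩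
  · obtain ⟨k, hkS⟩ := Set.nonempty_of_ncard_ne_zero (by omega : S.ncard ≠ 0)
    exact ⟨k, hkS, fun hkp => hp (Part.dom_iff_mem.mpr ⟨k, hkp⟩)⟩

theorem DNRString.append_singleton {α : List ℕ} {k : ℕ} (hα : DNRString α)
    (hk : k ∉ (Denumerable.ofNat Nat.Partrec.Code α.length).eval α.length) :
    DNRString (α ++ [k]) := by
  intro x hx
  simp only [List.length_append, List.length_singleton] at hx
  rcases Nat.lt_succ_iff_lt_or_eq.mp hx with hlt | rfl
  · simpa [List.getElem_append_left hlt] using hα x hlt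
  · simpa using hk

theorem GoodFrom.filter_extending {a : ℕ} {T : Finset (List ℕ)} {σ σ' : List ℕ}
    (hT : GoodFrom a T σ) (hσσ' : σ <+: σ') (hσ' : ∃ ρ ∈ T, σ' <+: ρ) :
    GoodFrom a (T.filter (σ' <+: ·)) σ' := by
  obtain ⟨-, -, hsucc⟩ := hT
  obtain ⟨ρ, hρT, hσ'ρ⟩ := hσ'
  refine ⟨⟨ρ, Finset.mem_filter.mpr ⟨hρT, hσ'ρ⟩⟩, fun ρ hρ => (Finset.mem_filter.mp hρ).2, ?_⟩
  rintro τ ⟨ρ, hρ, hσ'τ, hτρ, hne⟩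
  -- every extension of a successor of `τ` already extends `σ'`, so the filter loses none of them
  have hsucc_eq : {k | ∃ ρ ∈ T.filter (σ' <+: ·), τ ++ [k] <+: ρ} =
      {k | ∃ ρ ∈ T, τ ++ [k] <+: ρ} := by
    ext k
    refine ⟨fun ⟨ρ, hρ, hk⟩ => ⟨ρ, (Finset.mem_filter.mp hρ).1, hk⟩, fun ⟨ρ, hρ, hk⟩ => ?_⟩
    exact ⟨ρ, Finset.mem_filter.mpr ⟨hρ, hσ'τ.trans ((τ.prefix_append _).trans hk)⟩, hk⟩
  rw [hsucc_eq]
  exact hsucc τ ⟨ρ, (Finset.mem_filter.mp hρ).1, hσσ'.trans hσ'τ, hτρ, hne⟩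

theorem GoodFromFor.filter_extending {a : ℕ} {T : Finset (List ℕ)} {σ σ' : List ℕ}
    {P : Set (List ℕ)} (hT : GoodFromFor a T σ P) (hσσ' : σ <+: σ')
    (hσ' : ∃ ρ ∈ T, σ' <+: ρ) : GoodFromFor a (T.filter (σ' <+: ·)) σ' P :=
  ⟨hT.1.filter_extending hσσ' hσ', fun _ hρ => hT.2 (Finset.mem_filter.mp hρ).1⟩

theorem DNRString.exists_successor_goodFromFor_nonDNR {a : ℕ} (ha : 2 ≤ a)
    {T : Finset (List ℕ)} {α : List ℕ} (hα : DNRString α)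
    (hT : GoodFromFor a T α {σ | ¬ DNRString σ}) :
    ∃ k, DNRString (α ++ [k]) ∧
      GoodFromFor a (T.filter (α ++ [k] <+: ·)) (α ++ [k]) {σ | ¬ DNRString σ} := by
  obtain ⟨ρ, hρT⟩ := hT.1.1
  have hαρ : α ≠ ρ := by
    rintro rfl
    exact hT.2 hρT hα
  have hsuccs := hT.1.2.2 α ⟨ρ, hρT, List.prefix_refl α, hT.1.2.1 ρ hρT, hαρ⟩
  obtain ⟨k, ⟨ρ, hρT, hkρ⟩, hk⟩ := Set.exists_mem_notMem_part_of_one_lt_ncard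
    (ha.trans hsuccs) ((Denumerable.ofNat Nat.Partrec.Code α.length).eval α.length)
  exact ⟨k, hα.append_singleton hk, hT.filter_extending (α.prefix_append _) ⟨ρ, hρT, hkρ⟩⟩

theorem DNRString.not_goodFromFor_nonDNR {a : ℕ} (ha : 2 ≤ a) {α : List ℕ}
    (hα : DNRString α) (T : Finset (List ℕ)) : ¬ GoodFromFor a T α {σ | ¬ DNRString σ} := by
  suffices ∀ n α, DNRString α → ∀ T : Finset (List ℕ), (∀ ρ ∈ T, ρ.length ≤ α.length + n) →
      ¬ GoodFromFor a T α {σ | ¬ DNRString σ} from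
    this _ α hα T fun ρ hρ => (Finset.le_sup (f := List.length) hρ).trans (Nat.le_add_left _ _)
  intro n
  induction n with
  | zero =>
    rintro α hα T hlen ⟨⟨⟨ρ, hρT⟩, hext, -⟩, hnonDNR⟩
    have hαρ : α = ρ := (hext ρ hρT).eq_of_length_le (hlen ρ hρT)
    exact hnonDNR (hαρ ▸ hρT) hα
  | succ n ih =>
    intro α hα T hlen hT
    obtain ⟨k, hαk, hTk⟩ := hα.exists_successor_goodFromFor_nonDNR ha hT
    refine ih (α ++ [k]) hαk _ (fun ρ hρ => ?_) hTk
    have := hlen ρ (Finset.mem_filter.mp hρ).1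
    simp only [List.length_append, List.length_singleton]
    omega

theorem dnrString_nil : DNRString [] :=
  fun _ h => absurd h (Nat.not_lt_zero _)

/-- For every DNR string `α`, there is no `2`-good tree from `α` for the set of
non-DNR strings; in particular, the empty string is DNR and there is no `2`-good
tree from the empty string for the set of non-DNR strings. -/
theorem no_two_good_tree_of_nonDNR :
    (∀ α : List ℕ, DNRString α →
      ¬ ∃ T : Finset (List ℕ), IsTree T ∧ GoodFromFor 2 T α {σ | ¬ DNRString σ}) ∧
    DNRString [] ∧
    ¬ ∃ T : Finset (List ℕ), IsTree T ∧ GoodFromFor 2 T [] {σ | ¬ DNRString σ} := by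
  have hDNR : ∀ α : List ℕ, DNRString α →
      ¬ ∃ T : Finset (List ℕ), IsTree T ∧ GoodFromFor 2 T α {σ | ¬ DNRString σ} :=
    fun α hα ⟨T, _, hT⟩ => hα.not_goodFromFor_nonDNR le_rfl T hT
  exact ⟨hDNR, dnrString_nil, hDNR [] dnrString_nil⟩
end

section
/- For every natural number n, the fair-coin product measure of the set U_n = {A ∈ 2^ω : there exists x > n such that φ_x(x) halts and f*_A(x) = φ_x(x)} is at most 2^{−n}. -/
/-! Since `fstar A x` determines `A` on `{0, …, x - 1}` and `φ_x(x)` has at most one value, the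
event `fstar A x = φ_x(x)` lies in a single cylinder of length `x`, of measure `2^{-x}`.
A union bound over `x > n` and the geometric series give `2^{-n}`. -/

open MeasureTheory
open scoped ENNReal

/-- `f*_A(x)`: the restriction of `A : ℕ → Bool` to `{0,…,x−1}`, regarded as a
natural number `< 2^x`. -/
def fstar (A : ℕ → Bool) (x : ℕ) : ℕ :=
  ∑ i ∈ Finset.range x, if A i then 2 ^ i else 0

/-- `μ` is the fair-coin product probability measure on Cantor space
`2^ω = (ℕ → Bool)`, i.e. the countable product of the Bernoulli(1/2) measure on
`Bool`, characterized by being a probability measure giving each cylinder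
(finitely many prescribed coordinates) its fair-coin probability. -/
def IsFairCoinMeasure (μ : Measure (ℕ → Bool)) : Prop :=
  IsProbabilityMeasure μ ∧
    ∀ (F : Finset ℕ) (σ : ℕ → Bool),
      μ {A : ℕ → Bool | ∀ i ∈ F, A i = σ i} = (1 / 2 : ℝ≥0∞) ^ F.card

theorem fstar_succ (A : ℕ → Bool) (x : ℕ) :
    fstar A (x + 1) = fstar A x + if A x then 2 ^ x else 0 :=
  Finset.sum_range_succ _ _

theorem fstar_lt_two_pow (A : ℕ → Bool) (x : ℕ) : fstar A x < 2 ^ x := by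
  induction x with
  | zero => simp [fstar]
  | succ x ih =>
    rw [fstar_succ, pow_succ]
    split <;> omega

theorem eq_and_fstar_eq_of_fstar_succ_eq {A B : ℕ → Bool} {x : ℕ}
    (h : fstar A (x + 1) = fstar B (x + 1)) : A x = B x ∧ fstar A x = fstar B x := by
  have hA := fstar_lt_two_pow A x
  have hB := fstar_lt_two_pow B x
  rw [fstar_succ, fstar_succ] at h
  cases hAx : A x <;> cases hBx : B x <;>
    simp only [hAx, hBx, Bool.false_eq_true, ↓reduceIte, add_zero, true_and, reduceCtorEq,
      false_and] at h ⊢ <;> omega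

theorem eq_of_fstar_eq {A B : ℕ → Bool} {x : ℕ} (h : fstar A x = fstar B x) :
    ∀ i < x, A i = B i := by
  induction x with
  | zero => intro i hi; omega
  | succ x ih =>
    obtain ⟨hlast, hinit⟩ := eq_and_fstar_eq_of_fstar_succ_eq h
    intro i hi
    rcases Nat.lt_succ_iff_lt_or_eq.mp hi with hi | rfl
    · exact ih hinit i hi
    · exact hlast

namespace IsFairCoinMeasure

variable {μ : Measure (ℕ → Bool)}

theorem measure_le_of_forall_eq (hμ : IsFairCoinMeasure μ) {S : Set (ℕ → Bool)} {x : ℕ}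
    (σ : ℕ → Bool) (hS : ∀ A ∈ S, ∀ i < x, A i = σ i) : μ S ≤ (1 / 2 : ℝ≥0∞) ^ x :=
  calc μ S ≤ μ {A | ∀ i ∈ Finset.range x, A i = σ i} :=
        measure_mono fun A hA i hi => hS A hA i (Finset.mem_range.mp hi)
    _ = (1 / 2 : ℝ≥0∞) ^ x := by rw [hμ.2, Finset.card_range]

/-- A partial value has at most one element, so this set lies in a single cylinder of length
`x`. -/
theorem measure_fstar_mem_le (hμ : IsFairCoinMeasure μ) (p : Part ℕ) (x : ℕ) :
    μ {A | fstar A x ∈ p} ≤ (1 / 2 : ℝ≥0∞) ^ x := by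
  rcases Set.eq_empty_or_nonempty {A | fstar A x ∈ p} with hempty | ⟨A₀, hA₀⟩
  · simp [hempty]
  · exact hμ.measure_le_of_forall_eq A₀ fun A hA => eq_of_fstar_eq (Part.mem_unique hA hA₀)

end IsFairCoinMeasure

theorem ENNReal.tsum_one_div_two_pow_add_succ (n : ℕ) :
    ∑' k : ℕ, (1 / 2 : ℝ≥0∞) ^ (k + (n + 1)) = (1 / 2 : ℝ≥0∞) ^ n := by
  simp only [pow_add, ENNReal.tsum_mul_right, one_div, ENNReal.tsum_geometric_two, pow_succ]
  rw [mul_left_comm, ENNReal.mul_inv_cancel two_ne_zero ENNReal.ofNat_ne_top, mul_one]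

/-- The fair-coin measure of
`U_n = {A : ∃ x > n, φ_x(x) halts and f*_A(x) = φ_x(x)}` is at most `2^{−n}`. -/
theorem measure_Un_le (μ : Measure (ℕ → Bool)) (hμ : IsFairCoinMeasure μ) (n : ℕ) :
    μ {A : ℕ → Bool |
        ∃ x > n, fstar A x ∈ (Denumerable.ofNat Nat.Partrec.Code x).eval x}
      ≤ (1 / 2 : ℝ≥0∞) ^ n := by
  set E : ℕ → Set (ℕ → Bool) :=
    fun x => {A | fstar A x ∈ (Denumerable.ofNat Nat.Partrec.Code x).eval x}
  have hcover : {A : ℕ → Bool |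
        ∃ x > n, fstar A x ∈ (Denumerable.ofNat Nat.Partrec.Code x).eval x}
      ⊆ ⋃ k, E (k + (n + 1)) := by
    rintro A ⟨x, hx, hA⟩
    exact Set.mem_iUnion.2 ⟨x - (n + 1), by rwa [Nat.sub_add_cancel hx]⟩
  calc _ ≤ μ (⋃ k, E (k + (n + 1))) := measure_mono hcover
    _ ≤ ∑' k, μ (E (k + (n + 1))) := measure_iUnion_le _
    _ ≤ ∑' k : ℕ, (1 / 2 : ℝ≥0∞) ^ (k + (n + 1)) :=
        ENNReal.tsum_le_tsum fun k => hμ.measure_fstar_mem_le _ _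
    _ = (1 / 2 : ℝ≥0∞) ^ n := ENNReal.tsum_one_div_two_pow_add_succ n
end

section
/- Let m < n be natural numbers with n ≥ 1, let α be a string, and let P be a set of strings. Suppose T is an n/m-good tree from α for P (i.e., T is n/m-good from α and T ⊆ P), but there is no n/(m+1)-good tree from α for P. Let k_1,…,k_m be m distinct natural numbers such that for each i, T contains a subset which is an n-good tree from α*k_i for P. Then there is no natural number k ∉ {k_1,…,k_m} such that T contains a subset which is an n-good tree from α*k for P. -/
/-- `T` is `n/m`-good ("`n` over `m`" good) from `α`: at least `m` immediate
successors of `α` have extensions in `T`, and for every string `β` properly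
extending `α` and having a proper extension in `T`, at least `n` immediate
successors of `β` have extensions in `T`. -/
def GoodOverFrom (n m : ℕ) (T : Finset (List ℕ)) (α : List ℕ) : Prop :=
  m ≤ {k : ℕ | ∃ ρ ∈ T, α ++ [k] <+: ρ}.ncard ∧
    ∀ β : List ℕ, α <+: β → α ≠ β → (∃ ρ ∈ T, β <+: ρ ∧ β ≠ ρ) →
      n ≤ {k : ℕ | ∃ ρ ∈ T, β ++ [k] <+: ρ}.ncard

/-!
If `S'` were an `n`-good tree from `α*k'` inside `T` with `k'` new, then the union of `S'` with
the `m` given `n`-good trees from the `α*kᵢ` would be a subtree of `T` (hence a tree in `P`) in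
which `α` has `m + 1` branches and every node above `α` still has `n` branches, i.e. an
`n/(m+1)`-good tree from `α` for `P`, which does not exist.
-/

lemma IsTree.subset {T U : Finset (List ℕ)} (hT : IsTree T) (hUT : U ⊆ T) : IsTree U :=
  fun σ hσ τ hτ => hT σ (hUT hσ) τ (hUT hτ)

/-- The set whose `ncard` `GoodFrom` and `GoodOverFrom` bound. -/
def branches (S : Finset (List ℕ)) (β : List ℕ) : Set ℕ :=
  {k | ∃ ρ ∈ S, β ++ [k] <+: ρ}

lemma branches_finite (S : Finset (List ℕ)) (β : List ℕ) : (branches S β).Finite := by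
  refine (S.finite_toSet.image fun ρ => ρ[β.length]?.getD 0).subset ?_
  rintro k ⟨ρ, hρ, t, rfl⟩
  exact ⟨β ++ [k] ++ t, hρ, by simp [List.getElem_append_right]⟩

lemma ncard_branches_mono {S U : Finset (List ℕ)} (h : S ⊆ U) (β : List ℕ) :
    (branches S β).ncard ≤ (branches U β).ncard :=
  Set.ncard_le_ncard (fun _ ⟨ρ, hρ, hpre⟩ => ⟨ρ, h hρ, hpre⟩) (branches_finite U β)

lemma GoodFrom.mem_branches {a k : ℕ} {S U : Finset (List ℕ)} {α : List ℕ}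
    (hS : GoodFrom a S (α ++ [k])) (hSU : S ⊆ U) : k ∈ branches U α :=
  let ⟨ρ, hρ⟩ := hS.1
  ⟨ρ, hSU hρ, hS.2.1 ρ hρ⟩

lemma GoodFrom.le_ncard_branches {a : ℕ} {S U : Finset (List ℕ)} {σ β ρ : List ℕ}
    (hS : GoodFrom a S σ) (hSU : S ⊆ U) (hσβ : σ <+: β) (hρ : ρ ∈ S) (hβρ : β <+: ρ)
    (hne : β ≠ ρ) : a ≤ (branches U β).ncard :=
  (hS.2.2 β ⟨ρ, hρ, hσβ, hβρ, hne⟩).trans (ncard_branches_mono hSU β)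

lemma List.append_singleton_prefix_of_prefix {γ : Type*} {α β ρ : List γ} {c : γ}
    (hαβ : α <+: β) (hne : α ≠ β) (hβρ : β <+: ρ) (hαc : α ++ [c] <+: ρ) : α ++ [c] <+: β := by
  refine List.prefix_of_prefix_length_le hαc hβρ ?_
  have : α.length ≠ β.length := fun h => hne (hαβ.eq_of_length h)
  have := hαβ.length_le
  simp only [List.length_append, List.length_singleton]
  omega

lemma goodOverFrom_biUnion {ι : Type*} [Fintype ι] {n : ℕ} {α : List ℕ}
    {S : ι → Finset (List ℕ)} {f : ι → ℕ} (hf : Function.Injective f)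
    (hS : ∀ i, GoodFrom n (S i) (α ++ [f i])) :
    GoodOverFrom n (Fintype.card ι) (Finset.univ.biUnion S) α := by
  have hSU : ∀ i, S i ⊆ Finset.univ.biUnion S :=
    fun i => Finset.subset_biUnion_of_mem S (Finset.mem_univ i)
  constructor
  · have hrange : Set.range f ⊆ branches (Finset.univ.biUnion S) α := by
      rintro _ ⟨i, rfl⟩
      exact (hS i).mem_branches (hSU i)
    calc Fintype.card ι = (Set.range f).ncard := by
          rw [Set.ncard_range_of_injective hf, Nat.card_eq_fintype_card]
      _ ≤ _ := Set.ncard_le_ncard hrange (branches_finite _ α)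
  · rintro β hαβ hne ⟨ρ, hρ, hβρ, hβρne⟩
    obtain ⟨i, -, hρi⟩ := Finset.mem_biUnion.1 hρ
    have hαiβ : α ++ [f i] <+: β :=
      List.append_singleton_prefix_of_prefix hαβ hne hβρ ((hS i).2.1 ρ hρi)
    exact (hS i).le_ncard_branches (hSU i) hαiβ hρi hβρ hβρne

theorem no_extra_good_direction_general (m n : ℕ)
    (α : List ℕ) (P : Set (List ℕ))
    (T : Finset (List ℕ)) (hT : IsTree T)
    (hTP : ↑T ⊆ P)
    (hno : ¬ ∃ S : Finset (List ℕ), IsTree S ∧ GoodOverFrom n (m + 1) S α ∧ ↑S ⊆ P)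
    (k : Fin m → ℕ) (hk : Function.Injective k)
    (hki : ∀ i : Fin m, ∃ S ⊆ T, GoodFromFor n S (α ++ [k i]) P) :
    ¬ ∃ k' : ℕ, k' ∉ Set.range k ∧ ∃ S ⊆ T, GoodFromFor n S (α ++ [k']) P := by
  rintro ⟨k', hk', S', hS'T, hS'⟩
  choose S hST hS using hki
  let trees : Fin (m + 1) → Finset (List ℕ) := Fin.cons S' S
  let labels : Fin (m + 1) → ℕ := Fin.cons k' k
  have htreesT : Finset.univ.biUnion trees ⊆ T :=
    Finset.biUnion_subset.2 fun i _ => Fin.cases hS'T hST i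
  have hgood : GoodOverFrom n (m + 1) (Finset.univ.biUnion trees) α := by
    simpa using goodOverFrom_biUnion (S := trees) (f := labels)
      (Fin.cons_injective_iff.2 ⟨hk', hk⟩) (Fin.cases hS'.1 fun i => (hS i).1)
  exact hno ⟨_, hT.subset htreesT, hgood, (Finset.coe_subset.2 htreesT).trans hTP⟩

/-- Suppose `m < n`, `T` is an `n/m`-good tree from `α` for `P`, but there is no
`n/(m+1)`-good tree from `α` for `P`, and `k_1, …, k_m` are `m` distinct numbers
such that for each `i`, `T` contains a subset which is an `n`-good tree from
`α*k_i` for `P`. Then there is no `k ∉ {k_1, …, k_m}` such that `T` contains a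
subset which is an `n`-good tree from `α*k` for `P`. -/
theorem no_extra_good_direction (m n : ℕ) (hmn : m < n) (hn : 1 ≤ n)
    (α : List ℕ) (P : Set (List ℕ))
    (T : Finset (List ℕ)) (hT : IsTree T)
    (hgood : GoodOverFrom n m T α) (hTP : ↑T ⊆ P)
    (hno : ¬ ∃ S : Finset (List ℕ), IsTree S ∧ GoodOverFrom n (m + 1) S α ∧ ↑S ⊆ P)
    (k : Fin m → ℕ) (hk : Function.Injective k)
    (hki : ∀ i : Fin m, ∃ S ⊆ T, GoodFromFor n S (α ++ [k i]) P) :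
    ¬ ∃ k' : ℕ, k' ∉ Set.range k ∧ ∃ S ⊆ T, GoodFromFor n S (α ++ [k']) P :=
  no_extra_good_direction_general m n α P T hT hTP hno k hk hki
end
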